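/- arXiv:2301.07056 — 3 statements merged into one kernel-verified Lean document; each statement's English description precedes it below -/
import Mathlib

section
/- Let X = {P_1,...,P_r} be distinct points of P^n_k with dual linear forms L_1,...,L_r and socle degree s. Fix an integer u ≥ 1 and nonzero scalars α_1,...,α_r ∈ k^*, and set F_j = (1/(j+u)!) Σ_{i=1}^r α_i L_i^{j+u} for j ≥ 1. Then for all integers w ≥ 1, all i ∈ {1,...,r}, and all t ≥ max{s, s+w−u}, there exists a homogeneous form β ∈ R of degree t+u−w such that L_i^w = β ∘ F_t. -/
open MvPolynomial
open scoped Classical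

noncomputable section

variable {k : Type} [Field k]

/-- Apolarity action: `apol f F = f(∂/∂y) F`, defined on monomials by
`x^α ∘ y^β = (β!/(β-α)!) y^(β-α)` if `α ≤ β` and `0` otherwise. -/
def apol {n : ℕ} (f F : MvPolynomial (Fin n) k) : MvPolynomial (Fin n) k :=
  (AddMonoidAlgebra.coeff f).sum fun α c => (AddMonoidAlgebra.coeff F).sum fun β b =>
    if α ≤ β then
      MvPolynomial.monomial (β - α)
        (c * b * (β.prod fun i m => ((m.descFactorial (α i) : k))))
    else 0

/-- The linear form `a₀ y₀ + ⋯ + aₙ yₙ` associated to a point with coordinates `a`. -/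
def dualLin {n : ℕ} (a : Fin n → k) : MvPolynomial (Fin n) k :=
  ∑ j, MvPolynomial.C (a j) * MvPolynomial.X j

/-- Macaulay inverse system of a set of polynomials. -/
def perp {n : ℕ} (S : Set (MvPolynomial (Fin n) k)) : Set (MvPolynomial (Fin n) k) :=
  {F | ∀ g ∈ S, apol g F = 0}

/-- The `R`-submodule of `Γ` generated by `S` (as the `k`-span of the apolarity orbit). -/
def Rspan {n : ℕ} (S : Set (MvPolynomial (Fin n) k)) : Submodule k (MvPolynomial (Fin n) k) :=
  Submodule.span k {G | ∃ g, ∃ F ∈ S, G = apol g F}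

/-- The homogeneous vanishing ideal of a family of points (given by affine representatives). -/
def projIdeal {n r : ℕ} (a : Fin r → Fin n → k) : Ideal (MvPolynomial (Fin n) k) :=
  ⨅ i, ⨅ t : k, RingHom.ker (MvPolynomial.eval (t • a i))

/-- Hilbert function of `R/I`: `dim R_j − dim I_j`. -/
def HF {n : ℕ} (I : Ideal (MvPolynomial (Fin n) k)) (j : ℕ) : ℕ :=
  Module.finrank k (homogeneousSubmodule (Fin n) k j)
    - Module.finrank k
        (Submodule.restrictScalars k I ⊓ homogeneousSubmodule (Fin n) k j : Submodule k _)

/-- `s` is the socle degree: least integer with `HF I t = r` for all `t ≥ s`. -/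
def IsSocleDegree {n : ℕ} (I : Ideal (MvPolynomial (Fin n) k)) (r s : ℕ) : Prop :=
  (∀ t, s ≤ t → HF I t = r) ∧ ∀ s', (∀ t, s' ≤ t → HF I t = r) → s ≤ s'

/-- The affine representatives define distinct points of projective space. -/
def ProjDistinct {n r : ℕ} (a : Fin r → Fin n → k) : Prop :=
  (∀ i, a i ≠ 0) ∧ ∀ i j, i ≠ j → ∀ c : k, a i ≠ c • a j

/-- G-admissibility (with `F 0` playing the role of `F₁`). -/
def GAdmissible {n : ℕ} (z : MvPolynomial (Fin n) k) (F : ℕ → MvPolynomial (Fin n) k) : Prop :=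
  apol z (F 0) = 0 ∧ (∀ l, apol z (F (l + 1)) = F l) ∧
  ∀ l, (fun g => apol g (F (l + 1))) '' {g | ∀ G ∈ (Rspan {F l} : Submodule k (MvPolynomial (Fin n) k)), apol g G = 0}
      = ((Rspan {F 0} : Submodule k (MvPolynomial (Fin n) k)) : Set (MvPolynomial (Fin n) k))

/-- The family `F_t = (1/(t+u)!) Σ αᵢ Lᵢ^{t+u}`. -/
def famF {n r : ℕ} (a : Fin r → Fin n → k) (α : Fin r → k) (u t : ℕ) :
    MvPolynomial (Fin n) k :=
  (((t + u).factorial : k))⁻¹ • ∑ i, MvPolynomial.C (α i) * dualLin (a i) ^ (t + u)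

/-- `X` is arithmetically Gorenstein, tested with the linear nonzerodivisor `z`:
the inverse system of the Artinian reduction `I(X)+(z)` is cyclic. -/
def IsArithGorAt {n r : ℕ} (a : Fin r → Fin n → k) (z : MvPolynomial (Fin n) k) : Prop :=
  ∃ F, perp ((projIdeal a ⊔ Ideal.span {z} : Ideal _) : Set (MvPolynomial (Fin n) k))
    = ((Rspan {F} : Submodule k (MvPolynomial (Fin n) k)) : Set (MvPolynomial (Fin n) k))

/-- `X` is arithmetically Gorenstein (for some linear form not vanishing at any point). -/
def IsArithGor {n r : ℕ} (a : Fin r → Fin n → k) : Prop :=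
  ∃ b : Fin n → k, (∀ i, (∑ j, b j * a i j) ≠ 0) ∧ IsArithGorAt a (dualLin b)

/-!
A form `β` of degree `D` acts on a power of a linear form by evaluation at the dual point:
`β ∘ L_a^m = m!/(m-D)! · β(a) · L_a^(m-D)`. With `D = t + u - w` this turns `β ∘ F_t` into
`Σ_j α_j β(P_j)/w! · L_j^w`. Since `HF_X(D) = r` once `D ≥ s`, the points impose independent
conditions on forms of degree `D`, so some `β` vanishes at every `P_j` with `j ≠ i` and takes the
value `w!/α_i` at `P_i`.
-/

section Apolarity

variable {n : ℕ}

lemma apol_monomial_monomial (γ β : Fin n →₀ ℕ) (c b : k) :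
    apol (monomial γ c) (monomial β b) =
      if γ ≤ β then monomial (β - γ) (c * b * β.prod fun i m => (m.descFactorial (γ i) : k))
      else 0 := by
  unfold apol
  rw [← single_eq_monomial, ← single_eq_monomial, AddMonoidAlgebra.coeff_single,
    AddMonoidAlgebra.coeff_single, Finsupp.sum_single_index, Finsupp.sum_single_index]
  · split_ifs <;> simp
  · simp

lemma apol_add_left (f g F : MvPolynomial (Fin n) k) :
    apol (f + g) F = apol f F + apol g F := by
  unfold apol
  rw [AddMonoidAlgebra.coeff_add]
  refine Finsupp.sum_add_index' (fun γ => by simp) (fun γ c₁ c₂ => ?_)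
  rw [← Finsupp.sum_add]
  refine Finsupp.sum_congr fun β _ => ?_
  split_ifs <;> simp [add_mul]

lemma apol_add_right (f F G : MvPolynomial (Fin n) k) :
    apol f (F + G) = apol f F + apol f G := by
  unfold apol
  rw [AddMonoidAlgebra.coeff_add, ← Finsupp.sum_add]
  refine Finsupp.sum_congr fun γ _ => Finsupp.sum_add_index' (fun β => ?_) (fun β b₁ b₂ => ?_)
  · split_ifs <;> simp
  · split_ifs <;> simp [mul_add, add_mul]

lemma apol_smul_right (f : MvPolynomial (Fin n) k) (e : k) (F : MvPolynomial (Fin n) k) :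
    apol f (e • F) = e • apol f F := by
  unfold apol
  rw [AddMonoidAlgebra.coeff_smul, Finsupp.smul_sum]
  refine Finsupp.sum_congr fun γ _ => ?_
  rw [Finsupp.sum_smul_index' (fun β => by split_ifs <;> simp), Finsupp.smul_sum]
  refine Finsupp.sum_congr fun β _ => ?_
  split_ifs
  · rw [smul_monomial, smul_eq_mul]
    ring_nf
  · simp

lemma apol_sum_left {ι : Type*} (s : Finset ι) (f : ι → MvPolynomial (Fin n) k)
    (F : MvPolynomial (Fin n) k) : apol (∑ i ∈ s, f i) F = ∑ i ∈ s, apol (f i) F :=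
  map_sum (AddMonoidHom.mk' (apol · F) (apol_add_left · · F)) f s

lemma apol_sum_right {ι : Type*} (f : MvPolynomial (Fin n) k) (s : Finset ι)
    (F : ι → MvPolynomial (Fin n) k) : apol f (∑ i ∈ s, F i) = ∑ i ∈ s, apol f (F i) :=
  map_sum (AddMonoidHom.mk' (apol f) (apol_add_right f)) F s

lemma apol_C (c : k) (F : MvPolynomial (Fin n) k) : apol (C c) F = c • F := by
  induction F using MvPolynomial.induction_on' with
  | add F₁ F₂ h₁ h₂ => rw [apol_add_right, h₁, h₂, smul_add]
  | monomial β b =>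
    rw [C_apply, apol_monomial_monomial, if_pos (zero_le (a := β)), smul_monomial]
    simp [Finsupp.prod]

lemma prod_descFactorial_single_add {β γ : Fin n →₀ ℕ} {j : Fin n} (hj : j ∈ β.support) :
    (β.prod fun i m => (m.descFactorial ((Finsupp.single j 1 + γ : Fin n →₀ ℕ) i) : k)) =
      ((β j - γ j : ℕ) : k) * β.prod fun i m => (m.descFactorial (γ i) : k) := by
  have hpt : ∀ i m, (m.descFactorial ((Finsupp.single j 1 + γ : Fin n →₀ ℕ) i) : k) =
      (m.descFactorial (γ i) : k) * if j = i then ((m - γ j : ℕ) : k) else 1 := by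
    intro i m
    rcases eq_or_ne j i with rfl | hji
    · simp [Nat.descFactorial_succ, add_comm 1, mul_comm]
    · simp [hji]
  simp_rw [hpt, Finsupp.prod_mul, Finsupp.prod_ite_eq, if_pos hj, mul_comm]

lemma apol_X_mul (j : Fin n) (g F : MvPolynomial (Fin n) k) :
    apol (X j * g) F = pderiv j (apol g F) := by
  induction g using MvPolynomial.induction_on' with
  | add g₁ g₂ h₁ h₂ => rw [mul_add, apol_add_left, apol_add_left, h₁, h₂, map_add]
  | monomial γ c =>
  induction F using MvPolynomial.induction_on' with
  | add F₁ F₂ h₁ h₂ => rw [apol_add_right, apol_add_right, h₁, h₂, map_add]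
  | monomial β b =>
  rw [← pow_one (X j), ← monomial_single_add, apol_monomial_monomial, apol_monomial_monomial]
  by_cases hγβ : γ ≤ β
  swap
  · rw [if_neg hγβ, if_neg fun h => hγβ (le_add_self.trans h), map_zero]
  rw [if_pos hγβ, pderiv_monomial, Finsupp.tsub_apply]
  by_cases hjγβ : Finsupp.single j 1 + γ ≤ β
  · have hj := hjγβ j
    simp only [Finsupp.coe_add, Pi.add_apply, Finsupp.single_eq_same] at hj
    rw [if_pos hjγβ, prod_descFactorial_single_add (Finsupp.mem_support_iff.mpr (by omega)),
      add_comm, ← tsub_tsub]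
    ring_nf
  · have hj : β j = γ j := by
      refine le_antisymm (not_lt.mp fun hlt => hjγβ fun i => ?_) (hγβ j)
      rcases eq_or_ne j i with rfl | hji
      · simp only [Finsupp.coe_add, Pi.add_apply, Finsupp.single_eq_same]
        omega
      · simpa [hji] using hγβ i
    simp [if_neg hjγβ, hj]

lemma pderiv_dualLin (a : Fin n → k) (j : Fin n) : pderiv j (dualLin a) = C (a j) := by
  simp [dualLin, pderiv_X, Pi.single_apply]

lemma apol_monomial_dualLin_pow (a : Fin n → k) (γ : Fin n →₀ ℕ) (c : k) (m : ℕ) :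
    apol (monomial γ c) (dualLin a ^ m) =
      ((m.descFactorial γ.degree : k) * eval a (monomial γ c)) • dualLin a ^ (m - γ.degree) := by
  induction hN : γ.degree generalizing γ c with
  | zero =>
    obtain rfl : γ = 0 := (Finsupp.degree_eq_zero_iff γ).mp hN
    simp [← C_apply, apol_C]
  | succ N ih =>
    obtain ⟨j, hj⟩ : γ.support.Nonempty :=
      Finsupp.support_nonempty_iff.mpr (by rintro rfl; simp at hN)
    have hjγ : Finsupp.single j 1 ≤ γ :=
      Finsupp.single_le_iff.mpr (Nat.one_le_iff_ne_zero.mpr (Finsupp.mem_support_iff.mp hj))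
    obtain ⟨γ', rfl⟩ : ∃ γ', γ = Finsupp.single j 1 + γ' :=
      ⟨γ - Finsupp.single j 1, (add_tsub_cancel_of_le hjγ).symm⟩
    have hγ' : γ'.degree = N := by
      rw [map_add, Finsupp.degree_single] at hN
      omega
    rw [monomial_single_add, pow_one, apol_X_mul, ih γ' c hγ', Derivation.map_smul, pderiv_pow,
      pderiv_dualLin, eval_mul, eval_X, Nat.descFactorial_succ, tsub_tsub]
    simp only [smul_eq_C_mul, map_mul, map_natCast, Nat.cast_mul]
    ring

lemma MvPolynomial.IsHomogeneous.degree_eq_of_mem_support {σ R : Type*} [CommSemiring R]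
    {φ : MvPolynomial σ R} {D : ℕ} (hφ : φ.IsHomogeneous D) {d : σ →₀ ℕ} (hd : d ∈ φ.support) :
    d.degree = D :=
  (Finsupp.degree_apply d).trans (hφ.degree_eq_sum_deg_support hd).symm

lemma MvPolynomial.IsHomogeneous.apol_dualLin_pow {β : MvPolynomial (Fin n) k} {D : ℕ}
    (hβ : β.IsHomogeneous D) (a : Fin n → k) (m : ℕ) :
    apol β (dualLin a ^ m) = ((m.descFactorial D : k) * eval a β) • dualLin a ^ (m - D) := by
  rw [β.as_sum, apol_sum_left, map_sum, Finset.mul_sum, Finset.sum_smul]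
  refine Finset.sum_congr rfl fun d hd => ?_
  rw [apol_monomial_dualLin_pow, hβ.degree_eq_of_mem_support hd]

end Apolarity

lemma MvPolynomial.IsHomogeneous.eval_smul {σ R : Type*} [CommSemiring R] [Fintype σ]
    {f : MvPolynomial σ R} {D : ℕ} (hf : f.IsHomogeneous D) (c : R) (x : σ → R) :
    eval (c • x) f = c ^ D * eval x f := by
  rw [eval_eq', eval_eq', Finset.mul_sum]
  refine Finset.sum_congr rfl fun d hd => ?_
  simp_rw [Pi.smul_apply, smul_eq_mul, mul_pow, Finset.prod_mul_distrib, Finset.prod_pow_eq_pow_sum,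
    ← Finsupp.degree_eq_sum, hf.degree_eq_of_mem_support hd]
  ring

section PointEvaluation

variable {n r : ℕ}

lemma mem_projIdeal_iff {a : Fin r → Fin n → k} {f : MvPolynomial (Fin n) k} {D : ℕ}
    (hf : f.IsHomogeneous D) : f ∈ projIdeal a ↔ ∀ j, eval (a j) f = 0 := by
  simp only [projIdeal, Ideal.mem_iInf, RingHom.mem_ker, hf.eval_smul]
  exact ⟨fun h j => by simpa using h j 1, fun h j c => by rw [h j, mul_zero]⟩

def evalHomogeneous (a : Fin r → Fin n → k) (D : ℕ) :
    homogeneousSubmodule (Fin n) k D →ₗ[k] Fin r → k :=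
  LinearMap.pi fun j => (aeval (a j)).toLinearMap ∘ₗ (homogeneousSubmodule (Fin n) k D).subtype

lemma exists_isHomogeneous_eval_eq_of_HF_eq {a : Fin r → Fin n → k} {D : ℕ}
    (hD : HF (projIdeal a) D = r) (v : Fin r → k) :
    ∃ β : MvPolynomial (Fin n) k, β.IsHomogeneous D ∧ ∀ j, eval (a j) β = v j := by
  set V := homogeneousSubmodule (Fin n) k D
  have : Module.Finite k V := Module.Finite.iff_fg.mpr (homogeneousSubmodule_fg (Fin n) k D)
  have hker : LinearMap.ker (evalHomogeneous a D) =
      ((projIdeal a).restrictScalars k).comap V.subtype := by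
    ext f
    simp [evalHomogeneous, mem_projIdeal_iff f.2, funext_iff]
  have hrange : Module.finrank k (LinearMap.range (evalHomogeneous a D)) = r := by
    have hrank := (evalHomogeneous a D).finrank_range_add_finrank_ker
    rw [hker, ← Submodule.finrank_map_subtype_eq, Submodule.map_comap_subtype, inf_comm] at hrank
    unfold HF at hD
    omega
  obtain ⟨β, hβ⟩ := LinearMap.range_eq_top.mp
    (Submodule.eq_top_of_finrank_eq (by rw [hrange, Module.finrank_fin_fun])) v
  exact ⟨β, β.2, fun j => congrFun hβ j⟩

end PointEvaluation

lemma apol_famF [CharZero k] {n r : ℕ} {a : Fin r → Fin n → k} {α : Fin r → k} {u t D : ℕ}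
    {β : MvPolynomial (Fin n) k} (hβ : β.IsHomogeneous D) (hD : D ≤ t + u) :
    apol β (famF a α u t) =
      ∑ j, (α j * eval (a j) β / (t + u - D).factorial) • dualLin (a j) ^ (t + u - D) := by
  have hfac : ((t + u).factorial : k) = (t + u - D).factorial * (t + u).descFactorial D := by
    exact_mod_cast (Nat.factorial_mul_descFactorial hD).symm
  simp only [famF, apol_smul_right, apol_sum_right, C_mul', hβ.apol_dualLin_pow, smul_smul,
    Finset.smul_sum, hfac]
  refine Finset.sum_congr rfl fun j _ => ?_
  have hdesc : ((t + u).descFactorial D : k) ≠ 0 :=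
    Nat.cast_ne_zero.mpr (Nat.descFactorial_eq_zero_iff_lt.not.mpr (not_lt.mpr hD))
  field_simp

theorem stmt5_general [CharZero k] (n r s u : ℕ)
    (a : Fin r → Fin (n + 1) → k)
    (hs : IsSocleDegree (projIdeal a) r s)
    (α : Fin r → k) (hα : ∀ i, α i ≠ 0)
    (w : ℕ) (i : Fin r) (t : ℕ) (ht : max s (s + w - u) ≤ t) :
    ∃ β : MvPolynomial (Fin (n + 1)) k, β.IsHomogeneous (t + u - w) ∧
      dualLin (a i) ^ w = apol β (famF a α u t) := by
  rw [max_le_iff] at ht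
  obtain ⟨β, hβ, hβa⟩ := exists_isHomogeneous_eval_eq_of_HF_eq (hs.1 (t + u - w) (by omega))
    (Pi.single i (w.factorial / α i))
  refine ⟨β, hβ, ?_⟩
  rw [apol_famF hβ (Nat.sub_le _ _), Nat.sub_sub_self (by omega), Finset.sum_eq_single i]
  · have hscalar : (α i * (w.factorial / α i) / w.factorial : k) = 1 := by
      field_simp [hα i, Nat.factorial_ne_zero]
    rw [hβa, Pi.single_eq_same, hscalar, one_smul]
  · intro j _ hji
    simp [hβa, hji]
  · simp

/-- every power `L_i^w` can be recovered as `β ∘ F_t` from the power sums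
`F_t = (1/(t+u)!) Σ α_i L_i^{t+u}`, for suitable homogeneous `β` of degree `t+u−w`. -/
theorem stmt5 [CharZero k] [IsAlgClosed k] (n r s u : ℕ) (hu : 1 ≤ u)
    (a : Fin r → Fin (n + 1) → k) (ha : ProjDistinct a)
    (hs : IsSocleDegree (projIdeal a) r s)
    (α : Fin r → k) (hα : ∀ i, α i ≠ 0)
    (w : ℕ) (hw : 1 ≤ w) (i : Fin r) (t : ℕ) (ht : max s (s + w - u) ≤ t) :
    ∃ β : MvPolynomial (Fin (n + 1)) k, β.IsHomogeneous (t + u - w) ∧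
      dualLin (a i) ^ w = apol β (famF a α u t) :=
  stmt5_general n r s u a hs α hα w i t ht

end
end

section
/- Let A = R/I be a one-dimensional graded Gorenstein k-algebra of socle degree s and let z ∈ R_1 be a nonzerodivisor on A. Suppose F = {F_l}_{l ∈ N_+} ⊆ I^⊥ satisfies: (1) z ∘ F_l = F_{l−1} for l > 1 and z ∘ F_1 = 0, and (2) deg F_1 = s. Then there exist nonzero scalars α_l ∈ k^* such that F' = {(1/α_l) F_l} is G-admissible with respect to z; in particular F generates I^⊥ as an R-module. -/
open MvPolynomial
open scoped Classical

noncomputable section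

variable {k : Type} [Field k]

/-! Each `F l` is killed by `I` and by `z ^ (l + 1)`, so it lies in
`⟨H l⟩ = (I + (z ^ (l + 1)))^⊥`, say `F l = q_l ∘ H l`. Applying `z ^ l` gives
`F 0 = q_l ∘ H 0`; since `F 0` and `H 0` are nonzero of the same degree `s` and an operator without
constant term lowers degrees, `q_l` has a unit constant term and so acts invertibly. Hence
`⟨F l⟩ = ⟨H l⟩` for every `l`, and G-admissibility and generation pass from `H` to `F` with all
scalars equal to `1`. -/

namespace Apolarity

variable {n : ℕ}

lemma apol_monomial_monomial (α β : Fin n →₀ ℕ) (c b : k) :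
    apol (monomial α c) (monomial β b) =
      if α ≤ β then
        monomial (β - α) (c * b * (β.prod fun i m => ((m.descFactorial (α i) : k))))
      else 0 := by
  unfold apol
  rw [sum_monomial_eq (Finset.sum_eq_zero fun _ _ => by dsimp only; split <;> simp),
    sum_monomial_eq (by split <;> simp)]

lemma apol_zero_right (f : MvPolynomial (Fin n) k) : apol f 0 = 0 := by
  simp [apol]

lemma apol_add_left (f g F : MvPolynomial (Fin n) k) :
    apol (f + g) F = apol f F + apol g F := by
  unfold apol
  refine Finsupp.sum_add_index' (fun _ => by simp) fun _ _ _ => ?_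
  rw [← Finsupp.sum_add]
  congr 1; funext β b
  split <;> simp [add_mul, map_add]

lemma apol_add_right (f F G : MvPolynomial (Fin n) k) :
    apol f (F + G) = apol f F + apol f G := by
  unfold apol
  rw [← Finsupp.sum_add]
  congr 1; funext α c
  refine Finsupp.sum_add_index' (fun _ => by split <;> simp) fun _ _ _ => ?_
  split <;> simp [mul_add, add_mul, map_add]

lemma apol_sub_left (f g F : MvPolynomial (Fin n) k) :
    apol (f - g) F = apol f F - apol g F :=
  eq_sub_of_add_eq (by rw [← apol_add_left, sub_add_cancel])

lemma prod_descFactorial_add {α γ β : Fin n →₀ ℕ} (hα : α ≤ β - γ) :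
    (β.prod fun i m => ((m.descFactorial ((α + γ) i) : k))) =
      (β.prod fun i m => ((m.descFactorial (γ i) : k))) *
        ((β - γ).prod fun i m => ((m.descFactorial (α i) : k))) := by
  have hsupp : (β - γ).support ⊆ β.support := fun i hi => by
    simp only [Finsupp.mem_support_iff, Finsupp.tsub_apply] at hi ⊢
    omega
  rw [Finsupp.prod, Finsupp.prod, Finsupp.prod,
    Finset.prod_subset hsupp (f := fun i => (((β - γ) i).descFactorial (α i) : k)) fun i _ hi => by
      have hβγ : (β - γ) i = 0 := Finsupp.notMem_support_iff.1 hi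
      simp [hβγ, Nat.le_zero.1 (hβγ ▸ hα i)],
    ← Finset.prod_mul_distrib]
  refine Finset.prod_congr rfl fun i _ => ?_
  rw [Finsupp.add_apply, Finsupp.tsub_apply,
    ← Nat.descFactorial_mul_descFactorial (Nat.le_add_left (γ i) (α i)), Nat.add_sub_cancel]
  push_cast
  ring

lemma apol_mul (f g F : MvPolynomial (Fin n) k) :
    apol (f * g) F = apol f (apol g F) := by
  induction F using MvPolynomial.induction_on' with
  | add F G hF hG => rw [apol_add_right, apol_add_right, hF, hG, ← apol_add_right]
  | monomial β b =>
  induction g using MvPolynomial.induction_on' with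
  | add g₁ g₂ h₁ h₂ => rw [mul_add, apol_add_left, h₁, h₂, apol_add_left g₁, apol_add_right]
  | monomial γ d =>
  induction f using MvPolynomial.induction_on' with
  | add f₁ f₂ h₁ h₂ => rw [add_mul, apol_add_left, apol_add_left, h₁, h₂]
  | monomial α c =>
  rw [monomial_mul, apol_monomial_monomial, apol_monomial_monomial γ β]
  by_cases hγ : γ ≤ β
  · rw [if_pos hγ, apol_monomial_monomial]
    by_cases hα : α ≤ β - γ
    · rw [if_pos hα, if_pos (le_tsub_iff_right hγ |>.1 hα), add_comm α γ, tsub_add_eq_tsub_tsub,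
        add_comm γ α, prod_descFactorial_add hα]
      ring_nf
    · rw [if_neg hα, if_neg fun h => hα (le_tsub_of_add_le_right h)]
  · rw [if_neg hγ, apol_zero_right, if_neg fun h => hγ (le_trans le_add_self h)]

lemma apol_apol_comm (f g F : MvPolynomial (Fin n) k) :
    apol f (apol g F) = apol g (apol f F) := by
  rw [← apol_mul, mul_comm, apol_mul]

lemma apol_C (c : k) (F : MvPolynomial (Fin n) k) : apol (C c) F = c • F := by
  induction F using MvPolynomial.induction_on' with
  | add F G hF hG => rw [apol_add_right, hF, hG, smul_add]
  | monomial β b =>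
    rw [← monomial_zero', apol_monomial_monomial, if_pos (zero_le (a := β)), tsub_zero,
      smul_monomial]
    simp [Finsupp.prod]

lemma apol_one (F : MvPolynomial (Fin n) k) : apol 1 F = F := by
  rw [← C_1, apol_C, one_smul]

lemma apol_smul_left (c : k) (f F : MvPolynomial (Fin n) k) :
    apol (c • f) F = c • apol f F := by
  rw [smul_eq_C_mul, apol_mul, apol_C]

lemma apol_smul_right (c : k) (f F : MvPolynomial (Fin n) k) :
    apol f (c • F) = c • apol f F := by
  rw [← apol_C, apol_apol_comm, apol_C]

lemma exists_of_mem_support_apol {f F : MvPolynomial (Fin n) k} {m : Fin n →₀ ℕ}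
    (hm : m ∈ (apol f F).support) :
    ∃ α ∈ f.support, ∃ β ∈ F.support, α ≤ β ∧ m = β - α := by
  unfold apol Finsupp.sum at hm
  obtain ⟨α, hα, hm⟩ := Finset.mem_biUnion.1 (support_sum hm)
  obtain ⟨β, hβ, hm⟩ := Finset.mem_biUnion.1 (support_sum hm)
  refine ⟨α, hα, β, hβ, ?_⟩
  dsimp only at hm
  split_ifs at hm with hle
  · exact ⟨hle, Finset.mem_singleton.1 (support_monomial_subset hm)⟩
  · simp at hm

lemma totalDegree_apol_lt {f F : MvPolynomial (Fin n) k} (hf : constantCoeff f = 0)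
    (h : apol f F ≠ 0) : (apol f F).totalDegree < F.totalDegree := by
  obtain ⟨m, hm, hmax⟩ := Finset.exists_mem_eq_sup _ (support_nonempty.2 h) Finsupp.degree
  obtain ⟨α, hα, β, hβ, hle, rfl⟩ := exists_of_mem_support_apol hm
  have hα0 : α.degree ≠ 0 := by
    rw [ne_eq, Finsupp.degree_eq_zero_iff]
    rintro rfl
    exact mem_support_iff.1 hα (by rwa [constantCoeff_eq] at hf)
  have hsum : (β - α).degree + α.degree = β.degree := by
    rw [← map_add, tsub_add_cancel_of_le hle]
  have hβ := le_totalDegree hβ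
  change (apol f F).totalDegree = (β - α).degree at hmax
  change β.degree ≤ F.totalDegree at hβ
  omega

lemma apol_pow_eq_zero {f F : MvPolynomial (Fin n) k} {d : ℕ} (hf : constantCoeff f = 0)
    (hF : F.totalDegree < d) : apol (f ^ d) F = 0 := by
  induction d generalizing F with
  | zero => omega
  | succ d ih =>
    rw [pow_succ, apol_mul]
    by_cases h : apol f F = 0
    · rw [h, apol_zero_right]
    · exact ih (by have := totalDegree_apol_lt hf h; omega)

/-- Writing `g = c (1 - M)` with `M` nilpotent on `F`, a truncated geometric series in `M`
inverts `g`. -/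
lemma exists_apol_apol_eq_self {g : MvPolynomial (Fin n) k} (hg : constantCoeff g ≠ 0)
    (F : MvPolynomial (Fin n) k) : ∃ p, apol p (apol g F) = F := by
  set c := constantCoeff g
  set M := C c⁻¹ * (C c - g)
  have hM : constantCoeff M = 0 := by simp [M, c]
  have hgM : g = C c * (1 - M) := by
    rw [mul_sub, mul_one, ← mul_assoc, ← C_mul, mul_inv_cancel₀ hg, C_1, one_mul, sub_sub_cancel]
  refine ⟨C c⁻¹ * ∑ i ∈ Finset.range (F.totalDegree + 1), M ^ i, ?_⟩
  have hinv : (C c⁻¹ * ∑ i ∈ Finset.range (F.totalDegree + 1), M ^ i) * g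
      = 1 - M ^ (F.totalDegree + 1) := by
    rw [hgM, mul_mul_mul_comm, ← C_mul, inv_mul_cancel₀ hg, C_1, one_mul, geom_sum_mul_neg]
  rw [← apol_mul, hinv, apol_sub_left, apol_one, apol_pow_eq_zero hM (Nat.lt_succ_self _),
    sub_zero]

lemma mem_Rspan_singleton {F G : MvPolynomial (Fin n) k} :
    G ∈ Rspan {F} ↔ ∃ g, G = apol g F := by
  let apolLeft : MvPolynomial (Fin n) k →ₗ[k] MvPolynomial (Fin n) k :=
    { toFun := fun g => apol g F
      map_add' := fun f g => apol_add_left f g F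
      map_smul' := fun c f => apol_smul_left c f F }
  have hrange : {G | ∃ g, ∃ F' ∈ ({F} : Set _), G = apol g F'} = Set.range apolLeft := by
    ext G
    simp [apolLeft, eq_comm]
  rw [Rspan, hrange, ← LinearMap.coe_range, Submodule.span_eq, LinearMap.mem_range]
  exact exists_congr fun _ => eq_comm

lemma self_mem_Rspan {S : Set (MvPolynomial (Fin n) k)} {F : MvPolynomial (Fin n) k}
    (hF : F ∈ S) : F ∈ Rspan S :=
  Submodule.subset_span ⟨1, F, hF, (apol_one F).symm⟩

lemma apol_mem_Rspan {S : Set (MvPolynomial (Fin n) k)} {G : MvPolynomial (Fin n) k}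
    (g : MvPolynomial (Fin n) k) (hG : G ∈ Rspan S) : apol g G ∈ Rspan S := by
  induction hG using Submodule.span_induction with
  | mem _ hx =>
    obtain ⟨f, F, hF, rfl⟩ := hx
    exact Submodule.subset_span ⟨g * f, F, hF, (apol_mul g f F).symm⟩
  | zero => rw [apol_zero_right]; exact zero_mem _
  | add _ _ _ _ hx hy => rw [apol_add_right]; exact add_mem hx hy
  | smul c _ _ hx => rw [apol_smul_right]; exact Submodule.smul_mem _ c hx

lemma Rspan_le_iff {S T : Set (MvPolynomial (Fin n) k)} : Rspan S ≤ Rspan T ↔ S ⊆ Rspan T := by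
  refine ⟨fun h _ hF => h (self_mem_Rspan hF), fun h => Submodule.span_le.2 ?_⟩
  rintro _ ⟨g, F, hF, rfl⟩
  exact apol_mem_Rspan g (h hF)

lemma Rspan_singleton_eq_of_constantCoeff_ne_zero {g : MvPolynomial (Fin n) k}
    (hg : constantCoeff g ≠ 0) (F : MvPolynomial (Fin n) k) :
    Rspan {apol g F} = Rspan {F} := by
  obtain ⟨p, hp⟩ := exists_apol_apol_eq_self hg F
  refine le_antisymm (Rspan_le_iff.2 ?_) (Rspan_le_iff.2 ?_) <;>
    simp only [Set.singleton_subset_iff, SetLike.mem_coe, mem_Rspan_singleton]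
  exacts [⟨g, rfl⟩, ⟨p, hp.symm⟩]

lemma apol_eq_zero_of_mem_Rspan_singleton {F g : MvPolynomial (Fin n) k} (hg : apol g F = 0)
    {G : MvPolynomial (Fin n) k} (hG : G ∈ Rspan {F}) : apol g G = 0 := by
  obtain ⟨r, rfl⟩ := mem_Rspan_singleton.1 hG
  rw [apol_apol_comm, hg, apol_zero_right]

lemma Rspan_range_eq_of_forall_Rspan_singleton_eq {F H : ℕ → MvPolynomial (Fin n) k}
    (h : ∀ l, Rspan {F l} = Rspan {H l}) : Rspan (Set.range F) = Rspan (Set.range H) := by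
  have key : ∀ {F H : ℕ → MvPolynomial (Fin n) k}, (∀ l, Rspan {F l} ≤ Rspan {H l}) →
      Rspan (Set.range F) ≤ Rspan (Set.range H) := fun hFH =>
    Rspan_le_iff.2 <| Set.range_subset_iff.2 fun l => (hFH l).trans
      (Rspan_le_iff.2 (Set.singleton_subset_iff.2 (self_mem_Rspan (Set.mem_range_self l))))
      (self_mem_Rspan rfl)
  exact le_antisymm (key fun l => (h l).le) (key fun l => (h l).ge)

lemma mem_perp_sup_span_singleton {I : Ideal (MvPolynomial (Fin n) k)}
    {f F : MvPolynomial (Fin n) k} (hF : F ∈ perp (I : Set (MvPolynomial (Fin n) k)))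
    (hf : apol f F = 0) :
    F ∈ perp ((I ⊔ Ideal.span {f} : Ideal (MvPolynomial (Fin n) k)) :
      Set (MvPolynomial (Fin n) k)) := by
  intro g hg
  obtain ⟨a, ha, b, hb, rfl⟩ := Submodule.mem_sup.1 hg
  obtain ⟨r, rfl⟩ := Ideal.mem_span_singleton'.1 hb
  rw [apol_add_left, hF a ha, apol_mul, hf, apol_zero_right, zero_add]

section Descending

variable {z : MvPolynomial (Fin n) k} {F : ℕ → MvPolynomial (Fin n) k}

lemma apol_pow_eq_of_apol_succ (hF : ∀ l, apol z (F (l + 1)) = F l) (l : ℕ) :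
    apol (z ^ l) (F l) = F 0 := by
  induction l with
  | zero => rw [pow_zero, apol_one]
  | succ l ih => rw [pow_succ, apol_mul, hF, ih]

lemma apol_pow_succ_eq_zero_of_apol_succ (hF₀ : apol z (F 0) = 0)
    (hF : ∀ l, apol z (F (l + 1)) = F l) (l : ℕ) : apol (z ^ (l + 1)) (F l) = 0 := by
  rw [pow_succ', apol_mul, apol_pow_eq_of_apol_succ hF, hF₀]

end Descending

lemma GAdmissible.of_Rspan_singleton_eq {z : MvPolynomial (Fin n) k}
    {F H : ℕ → MvPolynomial (Fin n) k} (hH : GAdmissible z H) (hF₀ : apol z (F 0) = 0)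
    (hF : ∀ l, apol z (F (l + 1)) = F l) (hFH : ∀ l, Rspan {F l} = Rspan {H l}) :
    GAdmissible z F := by
  refine ⟨hF₀, hF, fun l => Set.Subset.antisymm ?_ ?_⟩
  · rintro _ ⟨g, hg, rfl⟩
    dsimp only
    obtain ⟨q, hq⟩ := mem_Rspan_singleton.1 ((hFH (l + 1)).le (self_mem_Rspan rfl))
    have hqH : apol q (H l) = F l := by rw [← hH.2.1 l, apol_apol_comm, ← hq, hF]
    have hgq : ∀ G ∈ Rspan {H l}, apol (g * q) G = 0 := fun G =>
      apol_eq_zero_of_mem_Rspan_singleton (by rw [apol_mul, hqH]; exact hg _ (self_mem_Rspan rfl))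
    rw [SetLike.mem_coe, hFH 0, hq, ← apol_mul, ← SetLike.mem_coe, ← hH.2.2 l]
    exact ⟨g * q, hgq, rfl⟩
  · intro G hG
    obtain ⟨r, rfl⟩ := mem_Rspan_singleton.1 hG
    refine ⟨r * z ^ (l + 1), fun G' hG' => ?_, ?_⟩
    · exact apol_eq_zero_of_mem_Rspan_singleton
        (by rw [apol_mul, apol_pow_succ_eq_zero_of_apol_succ hF₀ hF, apol_zero_right]) hG'
    · dsimp only
      rw [apol_mul, apol_pow_eq_of_apol_succ hF]

end Apolarity

open Apolarity in
theorem stmt11_general (n s : ℕ)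
    (I : Ideal (MvPolynomial (Fin (n + 1)) k))
    (z : MvPolynomial (Fin (n + 1)) k)
    (H : ℕ → MvPolynomial (Fin (n + 1)) k)
    (hH : GAdmissible z H)
    (hHgen : perp (I : Set (MvPolynomial (Fin (n + 1)) k))
      = ((Rspan (Set.range H) : Submodule k (MvPolynomial (Fin (n + 1)) k)) : Set (MvPolynomial (Fin (n + 1)) k)))
    (hHl : ∀ l : ℕ,
      ((Rspan {H l} : Submodule k (MvPolynomial (Fin (n + 1)) k)) : Set (MvPolynomial (Fin (n + 1)) k))
        = perp ((I ⊔ Ideal.span {z ^ (l + 1)} : Ideal (MvPolynomial (Fin (n + 1)) k)) : Set (MvPolynomial (Fin (n + 1)) k)))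
    (hHdeg : (H 0).totalDegree = s ∧ H 0 ≠ 0)
    (F : ℕ → MvPolynomial (Fin (n + 1)) k)
    (hFin : ∀ l, F l ∈ perp (I : Set (MvPolynomial (Fin (n + 1)) k)))
    (hF1 : apol z (F 0) = 0) (hFl : ∀ l, apol z (F (l + 1)) = F l)
    (hFdeg : (F 0).totalDegree = s ∧ F 0 ≠ 0) :
    ∃ αf : ℕ → k, (∀ l, αf l ≠ 0)
      ∧ GAdmissible z (fun l => (αf l)⁻¹ • F l)
      ∧ perp (I : Set (MvPolynomial (Fin (n + 1)) k))
          = ((Rspan (Set.range F) :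
              Submodule k (MvPolynomial (Fin (n + 1)) k)) : Set (MvPolynomial (Fin (n + 1)) k)) := by
  have hFH : ∀ l, ∃ q, F l = apol q (H l) := fun l => by
    rw [← mem_Rspan_singleton, ← SetLike.mem_coe, hHl l]
    exact mem_perp_sup_span_singleton (hFin l) (apol_pow_succ_eq_zero_of_apol_succ hF1 hFl l)
  choose q hq using hFH
  have hq_unit : ∀ l, constantCoeff (q l) ≠ 0 := fun l hql => by
    have hF0 : F 0 = apol (q l) (H 0) := by
      rw [← apol_pow_eq_of_apol_succ hFl l, hq l, apol_apol_comm, apol_pow_eq_of_apol_succ hH.2.1]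
    have := totalDegree_apol_lt hql (hF0 ▸ hFdeg.2)
    rw [← hF0] at this
    omega
  have hspan : ∀ l, Rspan {F l} = Rspan {H l} := fun l => by
    rw [hq l, Rspan_singleton_eq_of_constantCoeff_ne_zero (hq_unit l)]
  refine ⟨fun _ => 1, fun _ => one_ne_zero, ?_, ?_⟩
  · simpa only [inv_one, one_smul] using GAdmissible.of_Rspan_singleton_eq hH hF1 hFl hspan
  · rw [hHgen, Rspan_range_eq_of_forall_Rspan_singleton_eq hspan]

/-- for a one-dimensional graded Gorenstein algebra `R/I` (given via its
G-admissible structure system `{H_l}` with `⟨H_l⟩ = (I+(z^l))^⊥` and `deg H_1 = s`),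
any family `{F_l} ⊆ I^⊥` with `z ∘ F_{l+1} = F_l`, `z ∘ F_1 = 0` and `deg F_1 = s` is,
up to nonzero scalars, G-admissible; in particular it generates `I^⊥`. -/
theorem stmt11 [CharZero k] (n s : ℕ)
    (I : Ideal (MvPolynomial (Fin (n + 1)) k))
    (z : MvPolynomial (Fin (n + 1)) k) (hz1 : z.IsHomogeneous 1)
    (hznzd : ∀ f, z * f ∈ I → f ∈ I)
    (H : ℕ → MvPolynomial (Fin (n + 1)) k)
    (hH : GAdmissible z H)
    (hHgen : perp (I : Set (MvPolynomial (Fin (n + 1)) k))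
      = ((Rspan (Set.range H) : Submodule k (MvPolynomial (Fin (n + 1)) k)) : Set (MvPolynomial (Fin (n + 1)) k)))
    (hHl : ∀ l : ℕ,
      ((Rspan {H l} : Submodule k (MvPolynomial (Fin (n + 1)) k)) : Set (MvPolynomial (Fin (n + 1)) k))
        = perp ((I ⊔ Ideal.span {z ^ (l + 1)} : Ideal (MvPolynomial (Fin (n + 1)) k)) : Set (MvPolynomial (Fin (n + 1)) k)))
    (hHdeg : (H 0).totalDegree = s ∧ H 0 ≠ 0)
    (F : ℕ → MvPolynomial (Fin (n + 1)) k)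
    (hFin : ∀ l, F l ∈ perp (I : Set (MvPolynomial (Fin (n + 1)) k)))
    (hF1 : apol z (F 0) = 0) (hFl : ∀ l, apol z (F (l + 1)) = F l)
    (hFdeg : (F 0).totalDegree = s ∧ F 0 ≠ 0) :
    ∃ αf : ℕ → k, (∀ l, αf l ≠ 0)
      ∧ GAdmissible z (fun l => (αf l)⁻¹ • F l)
      ∧ perp (I : Set (MvPolynomial (Fin (n + 1)) k))
          = ((Rspan (Set.range F) :
              Submodule k (MvPolynomial (Fin (n + 1)) k)) : Set (MvPolynomial (Fin (n + 1)) k)) :=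
  stmt11_general n s I z H hH hHgen hHl hHdeg F hFin hF1 hFl hFdeg

end
end

section
/- Let Y ⊂ P^n_k (n > 3) be a set of 2n+1 generic points, whose defining ideal I(Y) is generated by quadrics and has Hilbert function HF_Y(2) = 2n+1. Then for no point P ∈ P^n_k is X = Y ∪ {P} arithmetically Gorenstein: indeed, the symmetry of the h-vector would force HF_X(2) = HF_Y(2) = 2n+1, hence I(X)_2 = I(Y)_2, contradicting I(Y) ⊋ I(X) with I(Y) generated in degree 2. -/
open MvPolynomial
open scoped Classical

noncomputable section

variable {k : Type} [Field k]

/-!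
Suppose `X = Y ∪ {P}` is arithmetically Gorenstein, witnessed by a linear form `z` vanishing at no
point of `X` and by `perp (I(X) + (z)) = Rspan {F}`. As `I(Y)` is generated by quadrics and
`I(X) ⊊ I(Y)`, also `I(X)₂ ⊊ I(Y)₂`, so `HF_X(2) = 2n + 2`, the number of points. Since `z` is a
nonzerodivisor modulo `I(X)`, `HF_X` is nondecreasing (hence constant from degree 2 on) and the
Artinian reduction `J = I(X) + (z)` has Hilbert function `ΔHF_X = (1, n, n + 1, 0, …)`. But an ideal
`J` with no forms of degree `> d` outside it and with cyclic inverse system `Rspan {F}` has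
`deg F ≤ d`, and the degree-`d` part of `Rspan {F}` is spanned by the top component of `F`, so
`HF_J(d) ≤ 1`; with `d = 2` this gives `n + 1 ≤ 1`.
-/

attribute [local instance] MvPolynomial.gradedAlgebra

lemma MvPolynomial.IsHomogeneous.degree_eq_of_mem_support_s14 {σ R : Type*} [CommSemiring R]
    {p : MvPolynomial σ R} {d : ℕ} (hp : p.IsHomogeneous d) {α : σ →₀ ℕ} (hα : α ∈ p.support) :
    α.degree = d := by
  by_contra h
  exact mem_support_iff.1 hα (hp.coeff_eq_zero h)

section Apolarity

variable {n : ℕ}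

def descFactorialProd (α β : Fin n →₀ ℕ) : ℕ := ∏ i, (β i).descFactorial (α i)

lemma descFactorialProd_eq_zero {α β : Fin n →₀ ℕ} (h : ¬ α ≤ β) : descFactorialProd α β = 0 := by
  obtain ⟨i, hi⟩ := not_forall.1 (mt Finsupp.le_def.2 h)
  exact Finset.prod_eq_zero (Finset.mem_univ i) (Nat.descFactorial_eq_zero_iff_lt.2 (not_le.1 hi))

lemma descFactorialProd_self (α : Fin n →₀ ℕ) :
    descFactorialProd α α = ∏ i, (α i).factorial := by
  simp [descFactorialProd, Nat.descFactorial_self]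

lemma descFactorialProd_add (α α' γ : Fin n →₀ ℕ) :
    descFactorialProd (α + α') γ = descFactorialProd α' γ * descFactorialProd α (γ - α') := by
  simp only [descFactorialProd, ← Finset.prod_mul_distrib, Finsupp.add_apply, Finsupp.tsub_apply]
  refine Finset.prod_congr rfl fun i _ => ?_
  rw [← Nat.descFactorial_mul_descFactorial (Nat.le_add_left (α' i) (α i)), Nat.add_sub_cancel,
    mul_comm]

def apolBilin : MvPolynomial (Fin n) k →ₗ[k] MvPolynomial (Fin n) k →ₗ[k] MvPolynomial (Fin n) k :=
  (basisMonomials (Fin n) k).constr k fun α =>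
    (basisMonomials (Fin n) k).constr k fun β => monomial (β - α) (descFactorialProd α β : k)

lemma apolBilin_monomial (α β : Fin n →₀ ℕ) (c b : k) :
    apolBilin (monomial α c) (monomial β b) =
      monomial (β - α) (c * b * (descFactorialProd α β : k)) := by
  have hbasis : ∀ (γ : Fin n →₀ ℕ) (a : k), monomial γ a = a • basisMonomials (Fin n) k γ := by
    simp [smul_monomial]
  rw [hbasis α, hbasis β, map_smul, map_smul, LinearMap.smul_apply, apolBilin,
    Module.Basis.constr_basis, Module.Basis.constr_basis, smul_monomial, smul_monomial,
    smul_eq_mul, smul_eq_mul, mul_assoc, mul_left_comm b]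

lemma apol_eq_apolBilin (f F : MvPolynomial (Fin n) k) : apol f F = apolBilin f F := by
  have hrepr : ∀ p : MvPolynomial (Fin n) k,
      (basisMonomials (Fin n) k).repr p = AddMonoidAlgebra.coeff p := fun _ => rfl
  rw [apol, apolBilin, Module.Basis.constr_apply, hrepr, LinearMap.finsupp_sum_apply]
  refine Finsupp.sum_congr fun α _ => ?_
  rw [LinearMap.smul_apply, Module.Basis.constr_apply, hrepr, Finsupp.smul_sum]
  refine Finsupp.sum_congr fun β _ => ?_
  split_ifs with h
  · rw [smul_smul, smul_monomial, smul_eq_mul, descFactorialProd, Nat.cast_prod, Finsupp.prod]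
    congr 2
    refine Finset.prod_subset (Finset.subset_univ _) fun i _ hi => ?_
    have hβ : β i = 0 := Finsupp.notMem_support_iff.1 hi
    have hα : α i = 0 := Nat.eq_zero_of_le_zero (hβ ▸ h i)
    simp [hα, hβ]
  · simp [descFactorialProd_eq_zero h]

lemma apolBilin_apply (f F : MvPolynomial (Fin n) k) :
    apolBilin f F = ∑ α ∈ f.support, ∑ β ∈ F.support,
      monomial (β - α) (coeff α f * coeff β F * (descFactorialProd α β : k)) := by
  conv_lhs => rw [f.as_sum, F.as_sum]
  simp only [map_sum, LinearMap.sum_apply, apolBilin_monomial]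
  exact Finset.sum_comm

lemma apolBilin_mul (f g F : MvPolynomial (Fin n) k) :
    apolBilin (f * g) F = apolBilin f (apolBilin g F) := by
  induction f using MvPolynomial.induction_on' with
  | add f₁ f₂ h₁ h₂ => simp only [add_mul, map_add, LinearMap.add_apply, h₁, h₂]
  | monomial α c =>
    induction g using MvPolynomial.induction_on' with
    | add g₁ g₂ h₁ h₂ => simp only [mul_add, map_add, LinearMap.add_apply, h₁, h₂]
    | monomial α' c' =>
      induction F using MvPolynomial.induction_on' with
      | add F₁ F₂ h₁ h₂ => simp only [map_add, h₁, h₂]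
      | monomial β b =>
        rw [monomial_mul, apolBilin_monomial, apolBilin_monomial, apolBilin_monomial, tsub_tsub,
          add_comm α', descFactorialProd_add]
        push_cast
        ring_nf

lemma apolBilin_one (F : MvPolynomial (Fin n) k) : apolBilin 1 F = F := by
  conv_lhs => rw [F.as_sum]
  conv_rhs => rw [F.as_sum]
  rw [map_sum]
  refine Finset.sum_congr rfl fun β _ => ?_
  rw [← C_1, C_apply, apolBilin_monomial]
  simp [descFactorialProd]

lemma isHomogeneous_apolBilin {f F : MvPolynomial (Fin n) k} {d e : ℕ}
    (hf : f.IsHomogeneous d) (hF : F.IsHomogeneous e) :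
    (apolBilin f F).IsHomogeneous (e - d) := by
  rw [← mem_homogeneousSubmodule, apolBilin_apply]
  refine Submodule.sum_mem _ fun α hα => Submodule.sum_mem _ fun β hβ => ?_
  by_cases h : α ≤ β
  · refine isHomogeneous_monomial _ ?_
    have hsum : (β - α).degree + α.degree = β.degree := by rw [← map_add, tsub_add_cancel_of_le h]
    rw [← hf.degree_eq_of_mem_support_s14 hα, ← hF.degree_eq_of_mem_support_s14 hβ]
    omega
  · simp [descFactorialProd_eq_zero h]

lemma apolBilin_eq_zero_of_lt {f F : MvPolynomial (Fin n) k} {d e : ℕ}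
    (hf : f.IsHomogeneous d) (hF : F.IsHomogeneous e) (h : e < d) : apolBilin f F = 0 := by
  rw [apolBilin_apply]
  refine Finset.sum_eq_zero fun α hα => Finset.sum_eq_zero fun β hβ => ?_
  have hαβ : ¬ α ≤ β := fun hle => by
    have := Finsupp.degree_mono hle
    rw [hf.degree_eq_of_mem_support_s14 hα, hF.degree_eq_of_mem_support_s14 hβ] at this
    omega
  simp [descFactorialProd_eq_zero hαβ]

lemma coeff_zero_apolBilin_monomial (α : Fin n →₀ ℕ) (F : MvPolynomial (Fin n) k) :
    coeff 0 (apolBilin (monomial α 1) F) = (∏ i, (α i).factorial : ℕ) * coeff α F := by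
  induction F using MvPolynomial.induction_on' with
  | add F₁ F₂ h₁ h₂ => simp only [map_add, coeff_add, h₁, h₂, mul_add]
  | monomial β b =>
    rw [apolBilin_monomial, coeff_monomial, coeff_monomial]
    by_cases hβα : β = α
    · subst hβα
      simp [descFactorialProd_self, mul_comm]
    · by_cases hle : α ≤ β
      · rw [if_neg fun h => hβα (le_antisymm (tsub_eq_zero_iff_le.1 h) hle), if_neg hβα, mul_zero]
      · simp [descFactorialProd_eq_zero hle, hβα]

lemma coeff_eq_zero_of_coeff_zero_apolBilin_monomial [CharZero k] {α : Fin n →₀ ℕ}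
    {F : MvPolynomial (Fin n) k} (h : coeff 0 (apolBilin (monomial α 1) F) = 0) :
    coeff α F = 0 := by
  rw [coeff_zero_apolBilin_monomial] at h
  refine (mul_eq_zero.1 h).resolve_left ?_
  exact Nat.cast_ne_zero.2 (Finset.prod_ne_zero_iff.2 fun i _ => Nat.factorial_ne_zero _)

lemma homogeneousComponent_apolBilin_monomial_of_ne_zero {α β : Fin n →₀ ℕ} {d : ℕ}
    (hα : α ≠ 0) (hβ : β.degree ≤ d) (c b : k) :
    homogeneousComponent d (apolBilin (monomial α c) (monomial β b)) = 0 := by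
  rw [apolBilin_monomial, homogeneousComponent_of_mem (isHomogeneous_monomial _ rfl)]
  by_cases hle : α ≤ β
  · have hsum : (β - α).degree + α.degree = β.degree := by rw [← map_add, tsub_add_cancel_of_le hle]
    have hα' : α.degree ≠ 0 := fun h => hα ((Finsupp.degree_eq_zero_iff α).1 h)
    rw [if_neg (by omega)]
  · simp [descFactorialProd_eq_zero hle]

lemma homogeneousComponent_apolBilin {F : MvPolynomial (Fin n) k} {d : ℕ}
    (hF : F.totalDegree ≤ d) (g : MvPolynomial (Fin n) k) :
    homogeneousComponent d (apolBilin g F) = coeff 0 g • homogeneousComponent d F := by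
  induction g using MvPolynomial.induction_on' with
  | add g₁ g₂ h₁ h₂ => simp only [map_add, LinearMap.add_apply, h₁, h₂, coeff_add, add_smul]
  | monomial α c =>
    rcases eq_or_ne α 0 with rfl | hα
    · rw [← C_apply, ← mul_one (C c), ← smul_eq_C_mul, map_smul, LinearMap.smul_apply,
        apolBilin_one, map_smul, coeff_smul, coeff_one, if_pos rfl, smul_eq_mul, mul_one]
    · rw [coeff_monomial, if_neg hα, zero_smul, F.as_sum, map_sum, map_sum]
      exact Finset.sum_eq_zero fun β hβ =>
        homogeneousComponent_apolBilin_monomial_of_ne_zero hα ((le_totalDegree hβ).trans hF) _ _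

end Apolarity

section HilbertFunction

variable {n : ℕ}

instance (d : ℕ) : Module.Finite k (homogeneousSubmodule (Fin n) k d) :=
  Module.Finite.iff_fg.2 (homogeneousSubmodule_fg _ _ d)

def homogeneousPart (I : Ideal (MvPolynomial (Fin n) k)) (d : ℕ) :
    Submodule k (MvPolynomial (Fin n) k) :=
  Submodule.restrictScalars k I ⊓ homogeneousSubmodule (Fin n) k d

instance (I : Ideal (MvPolynomial (Fin n) k)) (d : ℕ) : Module.Finite k (homogeneousPart I d) :=
  Submodule.finiteDimensional_of_le inf_le_right

lemma homogeneousPart_mono {I J : Ideal (MvPolynomial (Fin n) k)} (h : I ≤ J) (d : ℕ) :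
    homogeneousPart I d ≤ homogeneousPart J d :=
  inf_le_inf_right _ fun _ hf => h hf

lemma finrank_homogeneousPart_le (I : Ideal (MvPolynomial (Fin n) k)) (d : ℕ) :
    Module.finrank k (homogeneousPart I d) ≤ Module.finrank k (homogeneousSubmodule (Fin n) k d) :=
  Submodule.finrank_mono inf_le_right

lemma HF_add_finrank_homogeneousPart (I : Ideal (MvPolynomial (Fin n) k)) (d : ℕ) :
    HF I d + Module.finrank k (homogeneousPart I d) =
      Module.finrank k (homogeneousSubmodule (Fin n) k d) :=
  Nat.sub_add_cancel (finrank_homogeneousPart_le I d)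

lemma HF_le_finrank (I : Ideal (MvPolynomial (Fin n) k)) (d : ℕ) :
    HF I d ≤ Module.finrank k (homogeneousSubmodule (Fin n) k d) :=
  Nat.sub_le _ _

lemma HF_antitone {I J : Ideal (MvPolynomial (Fin n) k)} (h : I ≤ J) (d : ℕ) : HF J d ≤ HF I d := by
  have := Submodule.finrank_mono (homogeneousPart_mono h d)
  have := HF_add_finrank_homogeneousPart I d
  have := HF_add_finrank_homogeneousPart J d
  omega

lemma HF_lt_of_homogeneousPart_lt {I J : Ideal (MvPolynomial (Fin n) k)} {d : ℕ}
    (h : homogeneousPart I d < homogeneousPart J d) : HF J d < HF I d := by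
  have := Submodule.finrank_lt_finrank_of_lt h
  have := HF_add_finrank_homogeneousPart I d
  have := HF_add_finrank_homogeneousPart J d
  omega

lemma homogeneousSubmodule_le_of_HF_eq_zero {I : Ideal (MvPolynomial (Fin n) k)} {d : ℕ}
    (h : HF I d = 0) : homogeneousSubmodule (Fin n) k d ≤ Submodule.restrictScalars k I := by
  have hpart : homogeneousPart I d = homogeneousSubmodule (Fin n) k d :=
    Submodule.eq_of_le_of_finrank_le inf_le_right (by
      have := HF_add_finrank_homogeneousPart I d
      omega)
  exact hpart ▸ inf_le_left

lemma finrank_homogeneousSubmodule_one :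
    Module.finrank k (homogeneousSubmodule (Fin n) k 1) = n := by
  rw [homogeneousSubmodule_one_eq_span_X, finrank_span_eq_card (linearIndependent_X (Fin n) k),
    Fintype.card_fin]

lemma HF_lt_of_lt_of_eq_span {I J : Ideal (MvPolynomial (Fin n) k)} {d : ℕ}
    (hJ : J = Ideal.span {g | g ∈ J ∧ g.IsHomogeneous d}) (h : I < J) : HF J d < HF I d := by
  refine HF_lt_of_homogeneousPart_lt (lt_of_le_of_ne (homogeneousPart_mono h.le d) fun heq => ?_)
  refine h.not_ge ?_
  rw [hJ, Ideal.span_le]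
  exact fun g hg => (heq.ge hg).1

end HilbertFunction

section InverseSystem

variable {n : ℕ}

lemma finrank_le_finrank_add_finrank_ker {V W : Type*} [AddCommGroup V] [Module k V]
    [FiniteDimensional k V] [AddCommGroup W] [Module k W] [FiniteDimensional k W]
    (B : W →ₗ[k] V →ₗ[k] k) :
    Module.finrank k W ≤ Module.finrank k V + Module.finrank k (LinearMap.ker B) := by
  have hrange : Module.finrank k (LinearMap.range B) ≤ Module.finrank k V :=
    (Submodule.finrank_le _).trans Subspace.dual_finrank_eq.le
  have := LinearMap.finrank_range_add_finrank_ker B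
  omega

lemma Rspan_singleton_le_comap_homogeneousComponent {F : MvPolynomial (Fin n) k} {d : ℕ}
    (hF : F.totalDegree ≤ d) :
    Rspan {F} ≤ (k ∙ homogeneousComponent d F).comap (homogeneousComponent d) := by
  refine Submodule.span_le.2 ?_
  rintro _ ⟨g, _, rfl, rfl⟩
  rw [SetLike.mem_coe, Submodule.mem_comap, apol_eq_apolBilin, homogeneousComponent_apolBilin hF]
  exact Submodule.smul_mem _ _ (Submodule.mem_span_singleton_self _)

variable [CharZero k]

lemma mem_perp_of_isHomogeneous {J : Ideal (MvPolynomial (Fin n) k)}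
    (hJ : J.IsHomogeneous (homogeneousSubmodule (Fin n) k)) {G : MvPolynomial (Fin n) k} {d : ℕ}
    (hG : G.IsHomogeneous d) (h : ∀ g ∈ homogeneousPart J d, coeff 0 (apolBilin g G) = 0) :
    G ∈ perp (J : Set (MvPolynomial (Fin n) k)) := by
  intro g hg
  rw [apol_eq_apolBilin, ← sum_homogeneousComponent g, map_sum, LinearMap.sum_apply]
  refine Finset.sum_eq_zero fun e _ => ?_
  have hge : homogeneousComponent e g ∈ J := homogeneousComponent_mem_of_mem hJ hg e
  -- for `e ≤ d`, the form `apolBilin g_e G` is detected by the degree-`d` elements `x^α g_e ∈ J`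
  rcases lt_or_ge d e with hde | hed
  · exact apolBilin_eq_zero_of_lt (homogeneousComponent_isHomogeneous e g) hG hde
  · ext α
    rw [coeff_zero]
    by_cases hα : α.degree = d - e
    · apply coeff_eq_zero_of_coeff_zero_apolBilin_monomial
      rw [← apolBilin_mul]
      refine h _ ⟨J.mul_mem_left _ hge, ?_⟩
      have := (isHomogeneous_monomial (1 : k) hα).mul (homogeneousComponent_isHomogeneous e g)
      rwa [Nat.sub_add_cancel hed] at this
    · exact (isHomogeneous_apolBilin (homogeneousComponent_isHomogeneous e g) hG).coeff_eq_zero hα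

lemma totalDegree_le_of_mem_perp {J : Ideal (MvPolynomial (Fin n) k)} {d : ℕ}
    (htop : ∀ e, d < e → homogeneousSubmodule (Fin n) k e ≤ Submodule.restrictScalars k J)
    {F : MvPolynomial (Fin n) k} (hF : F ∈ perp (J : Set (MvPolynomial (Fin n) k))) :
    F.totalDegree ≤ d := by
  refine Finset.sup_le fun β hβ => ?_
  by_contra! hβd
  refine mem_support_iff.1 hβ (coeff_eq_zero_of_coeff_zero_apolBilin_monomial ?_)
  rw [← apol_eq_apolBilin, hF _ (htop _ hβd (isHomogeneous_monomial _ rfl)), coeff_zero]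

theorem HF_le_one_of_perp_eq_Rspan {J : Ideal (MvPolynomial (Fin n) k)}
    (hJ : J.IsHomogeneous (homogeneousSubmodule (Fin n) k)) {d : ℕ}
    (htop : ∀ e, d < e → homogeneousSubmodule (Fin n) k e ≤ Submodule.restrictScalars k J)
    {F : MvPolynomial (Fin n) k}
    (hF : perp (J : Set (MvPolynomial (Fin n) k)) = (Rspan {F} : Set (MvPolynomial (Fin n) k))) :
    HF J d ≤ 1 := by
  have hFperp : F ∈ perp (J : Set (MvPolynomial (Fin n) k)) :=
    hF ▸ Submodule.subset_span ⟨1, F, rfl, by rw [apol_eq_apolBilin, apolBilin_one]⟩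
  have hdeg := totalDegree_le_of_mem_perp htop hFperp
  -- forms of degree `d` orthogonal to `J_d` for `(g, G) ↦ (g ∘ G)(0)`; they lie in `perp J`
  let B := ((apolBilin.compr₂ (lcoeff k 0)).domRestrict₁₂ (homogeneousPart J d)
    (homogeneousSubmodule (Fin n) k d)).flip
  have hker : (LinearMap.ker B).map (homogeneousSubmodule (Fin n) k d).subtype ≤
      k ∙ homogeneousComponent d F := by
    rintro _ ⟨G, hG, rfl⟩
    have hGperp : (G : MvPolynomial (Fin n) k) ∈ perp (J : Set (MvPolynomial (Fin n) k)) :=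
      mem_perp_of_isHomogeneous hJ G.2 fun g hg => LinearMap.congr_fun hG ⟨g, hg⟩
    have := Rspan_singleton_le_comap_homogeneousComponent hdeg (SetLike.mem_coe.1 (hF ▸ hGperp))
    rwa [Submodule.mem_comap, homogeneousComponent_eq_self G.2] at this
  have hker1 : Module.finrank k (LinearMap.ker B) ≤ 1 := by
    rw [← Submodule.finrank_map_subtype_eq]
    exact (Submodule.finrank_mono hker).trans (finrank_span_le_card _) |>.trans (by simp)
  have := finrank_le_finrank_add_finrank_ker B
  have := HF_add_finrank_homogeneousPart J d
  omega

end InverseSystem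

section HyperplaneSection

variable {n : ℕ} {I : Ideal (MvPolynomial (Fin n) k)} {z : MvPolynomial (Fin n) k}

lemma homogeneousComponent_mul_of_isHomogeneous {σ R : Type*} [CommSemiring R]
    {z : MvPolynomial σ R} {m : ℕ} (hz : z.IsHomogeneous m) (q : MvPolynomial σ R) (d : ℕ) :
    homogeneousComponent (m + d) (z * q) = z * homogeneousComponent d q := by
  have := DirectSum.coe_decompose_mul_of_left_mem_of_le (homogeneousSubmodule σ R) (b := q) hz
    (Nat.le_add_right m d)
  rw [Nat.add_sub_cancel_left] at this
  rw [← decomposition.decompose'_apply, ← decomposition.decompose'_apply]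
  exact this

lemma homogeneousPart_sup_span_singleton (hI : I.IsHomogeneous (homogeneousSubmodule (Fin n) k))
    (hz : z.IsHomogeneous 1) (d : ℕ) :
    homogeneousPart (I ⊔ Ideal.span {z}) (d + 1) =
      homogeneousPart I (d + 1) ⊔
        (homogeneousSubmodule (Fin n) k d).map (LinearMap.mulLeft k z) := by
  apply le_antisymm
  · rintro g ⟨hg, hgd⟩
    obtain ⟨p, hp, q, hq, rfl⟩ := Submodule.mem_sup.1 hg
    obtain ⟨a, rfl⟩ := Ideal.mem_span_singleton'.1 hq
    have hza := homogeneousComponent_mul_of_isHomogeneous hz a d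
    rw [add_comm 1 d, mul_comm] at hza
    rw [← homogeneousComponent_eq_self hgd, map_add, hza]
    exact Submodule.add_mem_sup
      ⟨homogeneousComponent_mem_of_mem hI hp _, homogeneousComponent_mem _ _⟩
      ⟨_, homogeneousComponent_mem d a, rfl⟩
  · refine sup_le (homogeneousPart_mono le_sup_left _) ?_
    rintro _ ⟨f, hf, rfl⟩
    refine ⟨Ideal.mem_sup_right (Ideal.mul_mem_right f _ (Ideal.mem_span_singleton_self z)), ?_⟩
    simpa [add_comm] using hz.mul hf

lemma homogeneousPart_inf_map_mulLeft (hz : z.IsHomogeneous 1) (hzI : ∀ f, z * f ∈ I → f ∈ I)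
    (d : ℕ) :
    homogeneousPart I (d + 1) ⊓ (homogeneousSubmodule (Fin n) k d).map (LinearMap.mulLeft k z) =
      (homogeneousPart I d).map (LinearMap.mulLeft k z) := by
  apply le_antisymm
  · rintro _ ⟨⟨hfI, -⟩, f, hf, rfl⟩
    exact ⟨f, ⟨hzI f hfI, hf⟩, rfl⟩
  · rintro _ ⟨f, ⟨hfI, hf⟩, rfl⟩
    refine ⟨⟨I.mul_mem_left z hfI, ?_⟩, f, hf, rfl⟩
    simpa [add_comm] using hz.mul hf

theorem HF_sup_span_singleton_add_HF (hI : I.IsHomogeneous (homogeneousSubmodule (Fin n) k))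
    (hz : z.IsHomogeneous 1) (hz0 : z ≠ 0) (hzI : ∀ f, z * f ∈ I → f ∈ I) (d : ℕ) :
    HF (I ⊔ Ideal.span {z}) (d + 1) + HF I d = HF I (d + 1) := by
  have hmul : ∀ V : Submodule k (MvPolynomial (Fin n) k),
      Module.finrank k (V.map (LinearMap.mulLeft k z)) = Module.finrank k V := fun V =>
    (Submodule.equivMapOfInjective _ (mul_right_injective₀ hz0) V).finrank_eq.symm
  have hdim := Submodule.finrank_sup_add_finrank_inf_eq (homogeneousPart I (d + 1))
    ((homogeneousSubmodule (Fin n) k d).map (LinearMap.mulLeft k z))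
  rw [← homogeneousPart_sup_span_singleton hI hz, homogeneousPart_inf_map_mulLeft hz hzI, hmul,
    hmul] at hdim
  have := HF_add_finrank_homogeneousPart (I ⊔ Ideal.span {z}) (d + 1)
  have := HF_add_finrank_homogeneousPart I d
  have := HF_add_finrank_homogeneousPart I (d + 1)
  omega

theorem homogeneousSubmodule_le_sup_span_of_HF_eq
    (hI : I.IsHomogeneous (homogeneousSubmodule (Fin n) k)) (hz : z.IsHomogeneous 1) (hz0 : z ≠ 0)
    (hzI : ∀ f, z * f ∈ I → f ∈ I) {N d₀ : ℕ} (hN : ∀ t, HF I t ≤ N) (hd₀ : HF I d₀ = N) :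
    ∀ e, d₀ < e →
      homogeneousSubmodule (Fin n) k e ≤ Submodule.restrictScalars k (I ⊔ Ideal.span {z}) := by
  intro e he
  have hsec := HF_sup_span_singleton_add_HF hI hz hz0 hzI
  have hconst : ∀ t, d₀ ≤ t → HF I t = N := by
    intro t ht
    induction t, ht using Nat.le_induction with
    | base => exact hd₀
    | succ t _ ih =>
      have := hsec t
      have := hN (t + 1)
      omega
  obtain ⟨d, rfl⟩ : ∃ d, e = d + 1 := ⟨e - 1, by omega⟩
  refine homogeneousSubmodule_le_of_HF_eq_zero ?_
  have := hsec d
  have := hconst d (by omega)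
  have := hconst (d + 1) (by omega)
  omega

end HyperplaneSection

section Points

variable {n r : ℕ}

def restrictLine (a : Fin n → k) : MvPolynomial (Fin n) k →ₐ[k] Polynomial k :=
  aeval fun j => Polynomial.C (a j) * Polynomial.X

lemma eval_restrictLine (a : Fin n → k) (t : k) (f : MvPolynomial (Fin n) k) :
    (restrictLine a f).eval t = eval (t • a) f := by
  induction f using MvPolynomial.induction_on with
  | C c => simp [restrictLine]
  | add p q hp hq => simp [hp, hq]
  | mul_X p j hp =>
    rw [map_mul, Polynomial.eval_mul, hp]
    simp [restrictLine, mul_comm t]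

lemma restrictLine_monomial (a : Fin n → k) (α : Fin n →₀ ℕ) (c : k) :
    restrictLine a (monomial α c) =
      Polynomial.C (eval a (monomial α c)) * Polynomial.X ^ α.degree := by
  rw [restrictLine, aeval_monomial, eval_monomial, Finsupp.prod_fintype _ _ (fun _ => pow_zero _),
    Finsupp.prod_fintype _ _ (fun _ => pow_zero _), Finsupp.degree_eq_sum]
  simp [mul_pow, Finset.prod_mul_distrib, Finset.prod_pow_eq_pow_sum, mul_assoc]

lemma coeff_restrictLine (a : Fin n → k) (f : MvPolynomial (Fin n) k) (d : ℕ) :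
    (restrictLine a f).coeff d = eval a (homogeneousComponent d f) := by
  induction f using MvPolynomial.induction_on' with
  | add p q hp hq => simp [hp, hq]
  | monomial α c =>
    rw [restrictLine_monomial, Polynomial.coeff_C_mul_X_pow,
      homogeneousComponent_of_mem (isHomogeneous_monomial _ rfl)]
    split_ifs <;> simp

lemma restrictLine_of_isHomogeneous (a : Fin n → k) {f : MvPolynomial (Fin n) k} {d : ℕ}
    (hf : f.IsHomogeneous d) : restrictLine a f = Polynomial.C (eval a f) * Polynomial.X ^ d := by
  ext e
  rw [coeff_restrictLine, homogeneousComponent_of_mem hf, Polynomial.coeff_C_mul_X_pow]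
  split_ifs <;> simp

lemma mem_projIdeal_iff_restrictLine [Infinite k] (a : Fin r → Fin n → k)
    (f : MvPolynomial (Fin n) k) : f ∈ projIdeal a ↔ ∀ i, restrictLine (a i) f = 0 := by
  simp only [projIdeal, Ideal.mem_iInf, RingHom.mem_ker, ← eval_restrictLine]
  exact forall_congr' fun i =>
    ⟨fun h => Polynomial.funext (by simpa using h), fun h t => by simp [h]⟩

lemma isHomogeneous_projIdeal [Infinite k] (a : Fin r → Fin n → k) :
    (projIdeal a).IsHomogeneous (homogeneousSubmodule (Fin n) k) := by
  intro d f hf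
  change (decomposition.decompose' f d : MvPolynomial (Fin n) k) ∈ projIdeal a
  rw [decomposition.decompose'_apply, mem_projIdeal_iff_restrictLine]
  intro i
  rw [restrictLine_of_isHomogeneous _ (homogeneousComponent_isHomogeneous d f),
    ← coeff_restrictLine, (mem_projIdeal_iff_restrictLine a f).1 hf i, Polynomial.coeff_zero,
    map_zero, zero_mul]

lemma mem_projIdeal_of_isHomogeneous {a : Fin r → Fin n → k} {f : MvPolynomial (Fin n) k} {d : ℕ}
    (hf : f.IsHomogeneous d) (h : ∀ i, eval (a i) f = 0) : f ∈ projIdeal a := by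
  simp only [projIdeal, Ideal.mem_iInf, RingHom.mem_ker, ← eval_restrictLine]
  intro i t
  simp [restrictLine_of_isHomogeneous _ hf, h i]

lemma HF_projIdeal_le_card (a : Fin r → Fin n → k) (d : ℕ) : HF (projIdeal a) d ≤ r := by
  let E : homogeneousSubmodule (Fin n) k d →ₗ[k] (Fin r → k) := LinearMap.pi fun i =>
    (aeval (a i)).toLinearMap.comp (homogeneousSubmodule (Fin n) k d).subtype
  have hker : (LinearMap.ker E).map (homogeneousSubmodule (Fin n) k d).subtype ≤
      homogeneousPart (projIdeal a) d := by
    rintro _ ⟨f, hf, rfl⟩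
    refine ⟨mem_projIdeal_of_isHomogeneous f.2 fun i => ?_, f.2⟩
    simpa [E, coe_aeval_eq_eval] using congr_fun (LinearMap.mem_ker.1 hf) i
  have hkerdim := Submodule.finrank_mono hker
  rw [Submodule.finrank_map_subtype_eq] at hkerdim
  have hrange := (Submodule.finrank_le (LinearMap.range E)).trans_eq (Module.finrank_fin_fun k)
  have := LinearMap.finrank_range_add_finrank_ker E
  have := HF_add_finrank_homogeneousPart (projIdeal a) d
  omega

lemma isHomogeneous_dualLin (c : Fin n → k) : (dualLin c).IsHomogeneous 1 :=
  IsHomogeneous.sum _ _ _ fun _ _ => isHomogeneous_C_mul_X _ _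

lemma eval_dualLin (a c : Fin n → k) : eval a (dualLin c) = ∑ j, c j * a j := by
  simp [dualLin]

lemma mem_projIdeal_of_dualLin_mul_mem [Infinite k] {a : Fin r → Fin n → k} {c : Fin n → k}
    (hc : ∀ i, ∑ j, c j * a i j ≠ 0) {f : MvPolynomial (Fin n) k}
    (h : dualLin c * f ∈ projIdeal a) : f ∈ projIdeal a := by
  rw [mem_projIdeal_iff_restrictLine] at h ⊢
  intro i
  have hi := h i
  rw [map_mul, restrictLine_of_isHomogeneous _ (isHomogeneous_dualLin c), eval_dualLin] at hi
  exact (mul_eq_zero.1 hi).resolve_left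
    (mul_ne_zero (Polynomial.C_ne_zero.2 (hc i)) (pow_ne_zero _ Polynomial.X_ne_zero))

end Points

theorem stmt14_general [CharZero k] (n : ℕ) (hn : 3 < n)
    (b : Fin (2 * n + 1) → Fin (n + 1) → k)
    (hHF1 : HF (projIdeal b) 1 = n + 1)
    (hHF2 : ∀ t, 2 ≤ t → HF (projIdeal b) t = 2 * n + 1)
    (hquad : projIdeal b = Ideal.span
      {g : MvPolynomial (Fin (n + 1)) k | g ∈ projIdeal b ∧ g.IsHomogeneous 2})
    (P : Fin (n + 1) → k)
    (hstrict : projIdeal (Fin.snoc b P : Fin (2 * n + 1 + 1) → Fin (n + 1) → k)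
      < projIdeal b) :
    ¬ IsArithGor (Fin.snoc b P : Fin (2 * n + 1 + 1) → Fin (n + 1) → k) := by
  rintro ⟨c, hc, F, hF⟩
  set X : Fin (2 * n + 1 + 1) → Fin (n + 1) → k := Fin.snoc b P
  have hz0 : dualLin c ≠ 0 := fun h => hc 0 (by simpa [h] using (eval_dualLin (X 0) c).symm)
  have hI := isHomogeneous_projIdeal X
  have hzI : ∀ f, dualLin c * f ∈ projIdeal X → f ∈ projIdeal X :=
    fun f => mem_projIdeal_of_dualLin_mul_mem hc
  have hHF1X : HF (projIdeal X) 1 = n + 1 :=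
    le_antisymm ((HF_le_finrank _ 1).trans_eq finrank_homogeneousSubmodule_one)
      (hHF1.ge.trans (HF_antitone hstrict.le 1))
  have hHF2X : HF (projIdeal X) 2 = 2 * n + 2 :=
    le_antisymm (HF_projIdeal_le_card X 2) (by
      have := HF_lt_of_lt_of_eq_span hquad hstrict
      have := hHF2 2 le_rfl
      omega)
  have htop := homogeneousSubmodule_le_sup_span_of_HF_eq hI (isHomogeneous_dualLin c) hz0 hzI
    (HF_projIdeal_le_card X) hHF2X
  have hgor := HF_le_one_of_perp_eq_Rspan
    (hI.sup (Ideal.homogeneous_span _ _ (by simpa using ⟨1, isHomogeneous_dualLin c⟩))) htop hF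
  have hsec : HF (projIdeal X ⊔ Ideal.span {dualLin c}) 2 + HF (projIdeal X) 1 =
      HF (projIdeal X) 2 :=
    HF_sup_span_singleton_add_HF hI (isHomogeneous_dualLin c) hz0 hzI 1
  omega

/-- for `2n+1` generic points `Y` in `P^n` (`n > 3`), with `I(Y)` generated
by quadrics and `HF_Y(2) = 2n+1`, no point `P` makes `X = Y ∪ {P}` arithmetically
Gorenstein. -/
theorem stmt14 [CharZero k] [IsAlgClosed k] (n : ℕ) (hn : 3 < n)
    (b : Fin (2 * n + 1) → Fin (n + 1) → k) (hb : ProjDistinct b)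
    (hHF0 : HF (projIdeal b) 0 = 1) (hHF1 : HF (projIdeal b) 1 = n + 1)
    (hHF2 : ∀ t, 2 ≤ t → HF (projIdeal b) t = 2 * n + 1)
    (hquad : projIdeal b = Ideal.span
      {g : MvPolynomial (Fin (n + 1)) k | g ∈ projIdeal b ∧ g.IsHomogeneous 2})
    (P : Fin (n + 1) → k)
    (hX : ProjDistinct (Fin.snoc b P : Fin (2 * n + 1 + 1) → Fin (n + 1) → k))
    (hstrict : projIdeal (Fin.snoc b P : Fin (2 * n + 1 + 1) → Fin (n + 1) → k)
      < projIdeal b) :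
    ¬ IsArithGor (Fin.snoc b P : Fin (2 * n + 1 + 1) → Fin (n + 1) → k) :=
  stmt14_general n hn b hHF1 hHF2 hquad P hstrict
end
end
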